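/- Let q be a prime power with q ≥ 3 (more generally any finite field with |F_q| ≥ 3). For odd n = 2m+1 ≥ 3, the number of orbits of the group PGL_2(F_q) acting diagonally on the set C_n of n-tuples of points of P^1(F_q) with cyclically adjacent points distinct is [m]_{q^2} = (q^{2m}-1)/(q^2-1). -/

import Mathlib

open Finset
open scoped LinearAlgebra.Projectivization

/-- The cyclic successor of `i : Fin n`. -/
def cycSucc {n : ℕ} (i : Fin n) : Fin n := ⟨(i.1 + 1) % n, Nat.mod_lt _ i.pos⟩

/-- Cyclic configurations of `n` points of `ℙ¹(K)` with cyclically adjacent points distinct. -/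
def cycConfig (K : Type*) [Field K] (n : ℕ) : Set (Fin n → ℙ K (Fin 2 → K)) :=
  {v | ∀ i, v i ≠ v (cycSucc i)}

/-- Two cyclic configurations are related iff some projective linear transformation
(induced by a linear automorphism of `K²`, i.e. an element of `PGL₂(K)`) maps one
to the other. -/
def pglRel (K : Type*) [Field K] (n : ℕ) (x y : cycConfig K n) : Prop :=
  ∃ g : (Fin 2 → K) ≃ₗ[K] (Fin 2 → K),
    ∀ i, Projectivization.map g.toLinearMap g.injective ((x : Fin n → ℙ K (Fin 2 → K)) i)
      = (y : Fin n → ℙ K (Fin 2 → K)) i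

/-!
A configuration in `C_n` is a proper colouring of the `n`-cycle by the `q + 1` points of `ℙ¹`.
A proper colouring of a path with `n` edges closes up to one of the `(n + 1)`-cycle if
its ends differ and to one of the `n`-cycle if they agree, so `|C_{n+1}| + |C_n| = (q + 1) q^n`
and `|C_n| = q^n + (-1)^n q`. For odd `n` a proper colouring uses at least three colours, and a
linear automorphism of `K²` fixing three points of `ℙ¹` is a scalar, so every stabilizer in
`GL₂(K)` is the group of scalars, of order `q - 1`. Counting orbits then gives
`#orbits · (q² - 1)(q² - q) = (q^n - q)(q - 1)`, i.e. `#orbits = (q^{2m} - 1)/(q² - 1)`.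
-/

section Colorings

variable (X : Type*)

def cycleColorings (n : ℕ) : Set (Fin n → X) := {v | ∀ i, v i ≠ v (cycSucc i)}

def pathColorings (n : ℕ) : Set (Fin (n + 1) → X) := {v | ∀ i : Fin n, v i.castSucc ≠ v i.succ}

variable {X}

lemma cycSucc_castSucc {n : ℕ} (i : Fin n) : cycSucc i.castSucc = i.succ :=
  Fin.ext (Nat.mod_eq_of_lt (by simp))

lemma cycSucc_last (n : ℕ) : cycSucc (Fin.last n) = 0 :=
  Fin.ext (by simp [cycSucc])

lemma cycSucc_eq_add_one {n : ℕ} [NeZero n] (i : Fin n) : cycSucc i = i + 1 :=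
  Fin.ext (by simp [cycSucc, Fin.val_add])

lemma mem_cycleColorings_succ_iff {n : ℕ} {v : Fin (n + 1) → X} :
    v ∈ cycleColorings X (n + 1) ↔ v ∈ pathColorings X n ∧ v (Fin.last n) ≠ v 0 := by
  simp only [cycleColorings, pathColorings, Set.mem_ofPred_eq, Fin.forall_fin_succ',
    cycSucc_castSucc, cycSucc_last]

lemma mem_pathColorings_succ_iff {n : ℕ} {v : Fin (n + 2) → X} :
    v ∈ pathColorings X (n + 1) ↔
      Fin.init v ∈ pathColorings X n ∧ v (Fin.last n).castSucc ≠ v (Fin.last (n + 1)) := by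
  simp only [pathColorings, Set.mem_ofPred_eq, Fin.forall_fin_succ', Fin.init, Fin.succ_castSucc,
    Fin.succ_last]

lemma snoc_mem_pathColorings_iff {n : ℕ} {w : Fin (n + 1) → X} {x : X} :
    (Fin.snoc w x : Fin (n + 2) → X) ∈ pathColorings X (n + 1) ↔
      w ∈ pathColorings X n ∧ w (Fin.last n) ≠ x := by
  simp [mem_pathColorings_succ_iff]

lemma cycleColorings_one : cycleColorings X 1 = ∅ :=
  Set.eq_empty_of_forall_notMem fun v hv => hv 0 (congrArg v (Subsingleton.elim _ _))

def pathColoringsSuccEquiv (n : ℕ) :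
    pathColorings X (n + 1) ≃ Σ w : pathColorings X n, {x : X // x ≠ w.1 (Fin.last n)} where
  toFun v := ⟨⟨Fin.init v.1, (mem_pathColorings_succ_iff.1 v.2).1⟩,
    ⟨v.1 (Fin.last _), (mem_pathColorings_succ_iff.1 v.2).2.symm⟩⟩
  invFun p := ⟨Fin.snoc p.1.1 p.2.1, snoc_mem_pathColorings_iff.2 ⟨p.1.2, p.2.2.symm⟩⟩
  left_inv v := Subtype.ext (Fin.snoc_init_self v.1)
  right_inv p := Sigma.subtype_ext (Subtype.ext (by simp)) (by simp)

def closedPathColoringsEquiv (n : ℕ) :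
    ↥(pathColorings X (n + 1) ∩ {v | v (Fin.last _) = v 0}) ≃ cycleColorings X (n + 1) where
  toFun v := ⟨Fin.init v.1, mem_cycleColorings_succ_iff.2 <| by
    obtain ⟨hv, hlast⟩ := mem_pathColorings_succ_iff.1 v.2.1
    exact ⟨hv, fun h => hlast (h.trans v.2.2.symm)⟩⟩
  invFun w := ⟨Fin.snoc w.1 (w.1 0),
    snoc_mem_pathColorings_iff.2 (mem_cycleColorings_succ_iff.1 w.2), by simp⟩
  left_inv v := Subtype.ext <| by
    conv_rhs => rw [← Fin.snoc_init_self v.1, v.2.2]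
    rfl
  right_inv w := Subtype.ext (by simp)

variable [Finite X]

lemma card_pathColorings (n : ℕ) :
    Nat.card (pathColorings X n) = Nat.card X * (Nat.card X - 1) ^ n := by
  have := Fintype.ofFinite X
  induction n with
  | zero => simp [pathColorings]
  | succ n ih =>
    classical
    rw [Nat.card_congr (pathColoringsSuccEquiv n), Nat.card_sigma]
    simp only [Nat.card_eq_fintype_card] at ih ⊢
    simp [ih, pow_succ, mul_assoc]

lemma card_pathColorings_eq_add (n : ℕ) :
    Nat.card (pathColorings X (n + 1)) =
      Nat.card (cycleColorings X (n + 2)) + Nat.card (cycleColorings X (n + 1)) := by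
  have hopen : pathColorings X (n + 1) \ {v | v (Fin.last _) = v 0} = cycleColorings X (n + 2) :=
    Set.ext fun _ => mem_cycleColorings_succ_iff.symm
  rw [← Nat.card_congr (closedPathColoringsEquiv n), ← hopen]
  exact (Set.ncard_inter_add_ncard_sdiff_eq_ncard _ _).symm.trans (add_comm _ _)

lemma card_cycleColorings {d : ℕ} (hX : Nat.card X = d + 1) (n : ℕ) :
    (Nat.card (cycleColorings X (n + 1)) : ℤ) = d ^ (n + 1) + (-1) ^ (n + 1) * d := by
  induction n with
  | zero => simp [cycleColorings_one]
  | succ n ih =>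
    have h := card_pathColorings_eq_add (X := X) n
    rw [card_pathColorings, hX, Nat.add_sub_cancel] at h
    have hZ : ((d + 1) * d ^ (n + 1) : ℤ) =
        Nat.card (cycleColorings X (n + 2)) + Nat.card (cycleColorings X (n + 1)) := by
      exact_mod_cast h
    linear_combination -hZ - ih

end Colorings

open Fin.NatCast in
lemma exists_three_ne_of_mem_cycleColorings {X : Type*} {n : ℕ} (hn : Odd n) {v : Fin n → X}
    (hv : v ∈ cycleColorings X n) : ∃ i j k, v i ≠ v j ∧ v i ≠ v k ∧ v j ≠ v k := by
  have : NeZero n := ⟨hn.pos.ne'⟩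
  by_contra! h
  let u : ℕ → X := fun i => v (i : Fin n)
  have hu (i : ℕ) : u (i + 1) ≠ u i := by
    simpa [u, cycSucc_eq_add_one] using (hv (i : Fin n)).symm
  have parity (i : ℕ) : u i = u 0 ↔ Even i := by
    induction i with
    | zero => simp
    | succ i ih =>
      rw [Nat.even_add_one, ← ih]
      exact ⟨fun h1 h2 => hu i (h1.trans h2.symm), fun h1 => (h _ _ _ h1 (hu i).symm).symm⟩
  exact Nat.not_even_iff_odd.2 hn ((parity n).1 (by simp [u]))

namespace Module.End

variable {K V : Type*} [Field K] [AddCommGroup V] [Module K V]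

lemma eq_smul_one_of_linearIndependent_pair (hV : finrank K V = 2)
    {f : End K V} {a : K} {u w : V} (huw : LinearIndependent K ![u, w]) (hu : f u = a • u)
    (hw : f w = a • w) : f = a • 1 := by
  let b := basisOfLinearIndependentOfCardEqFinrank huw (by simp [hV])
  refine b.ext fun i => ?_
  fin_cases i
  · simpa [b] using hu
  · simpa [b] using hw

end Module.End

namespace Projectivization

open Module

variable {K V : Type*} [Field K] [AddCommGroup V] [Module K V]

lemma linearIndependent_rep_pair {p q : ℙ K V} (h : p ≠ q) :
    LinearIndependent K ![p.rep, q.rep] := by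
  convert independent_iff.1 ((independent_pair_iff_ne p q).2 h) using 1
  ext i
  fin_cases i <;> rfl

lemma exists_hasEigenvector_rep_of_smul_eq {g : V ≃ₗ[K] V} {p : ℙ K V} (hp : g • p = p) :
    ∃ a, End.HasEigenvector (g : End K V) a p.rep := by
  rw [← p.mk_rep, smul_mk, mk_eq_mk_iff'] at hp
  obtain ⟨a, ha⟩ := hp
  exact ⟨a, End.mem_eigenspace_iff.2 ha.symm, p.rep_nonzero⟩

lemma exists_eq_smul_one_of_hasEigenvector_rep (hV : finrank K V = 2) {f : End K V}
    {p₁ p₂ p₃ : ℙ K V} (h₁₂ : p₁ ≠ p₂) (h₁₃ : p₁ ≠ p₃) (h₂₃ : p₂ ≠ p₃) {a₁ a₂ a₃ : K}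
    (hf₁ : f.HasEigenvector a₁ p₁.rep) (hf₂ : f.HasEigenvector a₂ p₂.rep)
    (hf₃ : f.HasEigenvector a₃ p₃.rep) : ∃ a : K, f = a • 1 := by
  have of_eq {p q : ℙ K V} {a b : K} (hpq : p ≠ q) (hp : f.HasEigenvector a p.rep)
      (hq : f.HasEigenvector b q.rep) (hab : a = b) : ∃ c : K, f = c • 1 :=
    ⟨a, End.eq_smul_one_of_linearIndependent_pair hV (linearIndependent_rep_pair hpq)
      hp.apply_eq_smul (hab ▸ hq.apply_eq_smul)⟩
  by_cases h12 : a₁ = a₂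
  · exact of_eq h₁₂ hf₁ hf₂ h12
  by_cases h13 : a₁ = a₃
  · exact of_eq h₁₃ hf₁ hf₃ h13
  by_cases h23 : a₂ = a₃
  · exact of_eq h₂₃ hf₂ hf₃ h23
  -- eigenvectors for three distinct eigenvalues would be independent in a plane
  have hli := f.eigenvectors_linearIndependent' ![a₁, a₂, a₃]
    (by intro i j; fin_cases i <;> fin_cases j <;> simp [*, Ne.symm, eq_comm])
    ![p₁.rep, p₂.rep, p₃.rep] (by intro i; fin_cases i <;> assumption)
  have : Module.Finite K V := Module.finite_of_finrank_eq_succ hV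
  simpa [hV] using hli.fintype_card_le_finrank

end Projectivization

section Scalars

open Module Projectivization

variable (K V : Type*) [Field K] [AddCommGroup V] [Module K V]

def scalarSubgroup : Subgroup (V ≃ₗ[K] V) :=
  (DistribMulAction.toModuleAut K V : Kˣ →* V ≃ₗ[K] V).range

variable {K V}

lemma card_scalarSubgroup [Nontrivial V] : Nat.card (scalarSubgroup K V) = Nat.card K - 1 := by
  obtain ⟨v, hv⟩ := exists_ne (0 : V)
  have hinj : Function.Injective (DistribMulAction.toModuleAut K V : Kˣ →* V ≃ₗ[K] V) :=
    fun c c' h => Units.ext (smul_left_injective K hv (LinearEquiv.congr_fun h v :))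
  rw [← Nat.card_units K, ← Nat.card_range_of_injective hinj]
  rfl

lemma smul_eq_self_of_mem_scalarSubgroup {g : V ≃ₗ[K] V} (hg : g ∈ scalarSubgroup K V)
    (p : ℙ K V) : g • p = p := by
  obtain ⟨c, rfl⟩ := hg
  induction p using Projectivization.ind with
  | h v hv => exact (mk_eq_mk_iff' K _ _ _ hv).2 ⟨c, rfl⟩

lemma mem_scalarSubgroup_of_eq_smul_one [Nontrivial V] {g : V ≃ₗ[K] V} {a : K}
    (hg : (g : End K V) = a • 1) : g ∈ scalarSubgroup K V := by
  have ha : a ≠ 0 := by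
    rintro rfl
    obtain ⟨v, hv⟩ := exists_ne (0 : V)
    exact hv (g.injective (by simpa using LinearMap.congr_fun hg v))
  exact ⟨Units.mk0 a ha, LinearEquiv.ext fun v => (LinearMap.congr_fun hg v).symm⟩

lemma stabilizer_eq_scalarSubgroup (hV : finrank K V = 2) {ι : Type*} {x : ι → ℙ K V}
    (hx : ∃ i j k, x i ≠ x j ∧ x i ≠ x k ∧ x j ≠ x k) :
    MulAction.stabilizer (V ≃ₗ[K] V) x = scalarSubgroup K V := by
  have : Nontrivial V := Module.nontrivial_of_finrank_eq_succ hV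
  obtain ⟨i, j, k, hij, hik, hjk⟩ := hx
  ext g
  rw [MulAction.mem_stabilizer_iff]
  refine ⟨fun hg => ?_, fun hg => funext fun l => smul_eq_self_of_mem_scalarSubgroup hg (x l)⟩
  obtain ⟨a₁, h₁⟩ := exists_hasEigenvector_rep_of_smul_eq (congrFun hg i)
  obtain ⟨a₂, h₂⟩ := exists_hasEigenvector_rep_of_smul_eq (congrFun hg j)
  obtain ⟨a₃, h₃⟩ := exists_hasEigenvector_rep_of_smul_eq (congrFun hg k)
  obtain ⟨a, ha⟩ := exists_eq_smul_one_of_hasEigenvector_rep hV hij hik hjk h₁ h₂ h₃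
  exact mem_scalarSubgroup_of_eq_smul_one ha

end Scalars

lemma MulAction.card_mul_card_eq_card_orbitRel_quotient_mul_card {G X : Type*} [Group G]
    [MulAction G X] (H : Subgroup G) (hH : ∀ x : X, stabilizer G x = H) :
    Nat.card X * Nat.card H = Nat.card (orbitRel.Quotient G X) * Nat.card G := by
  have e : X ≃ orbitRel.Quotient G X × (G ⧸ H) :=
    (selfEquivSigmaOrbitsQuotientStabilizer G X).trans <|
      (Equiv.sigmaCongrRight fun _ => Subgroup.quotientEquivOfEq (hH _)).trans
        (Equiv.sigmaEquivProd _ _)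
  rw [Nat.card_congr e, Nat.card_prod, mul_assoc,
    ← Subgroup.card_eq_card_quotient_mul_card_subgroup]

def cycleColoringsSubMulAction (G X : Type*) [Group G] [MulAction G X] (n : ℕ) :
    SubMulAction G (Fin n → X) where
  carrier := cycleColorings X n
  smul_mem' g _ hv i := by simpa using hv i

lemma card_linearEquiv_fin (K : Type*) [Field K] [Fintype K] (n : ℕ) :
    Nat.card ((Fin n → K) ≃ₗ[K] (Fin n → K)) =
      ∏ i : Fin n, (Fintype.card K ^ n - Fintype.card K ^ (i : ℕ)) := by
  rw [← Matrix.card_GL_field, Nat.card_congr ((Matrix.GeneralLinearGroup.toLin).trans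
    (LinearMap.GeneralLinearGroup.generalLinearEquiv K (Fin n → K))).toEquiv]

section PGL

variable {K : Type*} [Field K]

lemma pglRel_iff_orbitRel {n : ℕ}
    {x y : cycleColoringsSubMulAction ((Fin 2 → K) ≃ₗ[K] (Fin 2 → K)) (ℙ K (Fin 2 → K)) n} :
    pglRel K n x y ↔ MulAction.orbitRel ((Fin 2 → K) ≃ₗ[K] (Fin 2 → K)) _ x y := by
  rw [MulAction.orbitRel_apply, MulAction.mem_orbit_symm, MulAction.mem_orbit_iff]
  simp only [pglRel, Subtype.ext_iff, funext_iff]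
  rfl

lemma card_quot_pglRel_mul_card {n : ℕ} (hn : Odd n) :
    Nat.card (Quot (pglRel K n)) * Nat.card ((Fin 2 → K) ≃ₗ[K] (Fin 2 → K)) =
      Nat.card (cycConfig K n) * (Nat.card K - 1) := by
  have e : Quot (pglRel K n) ≃ MulAction.orbitRel.Quotient ((Fin 2 → K) ≃ₗ[K] (Fin 2 → K))
      (cycleColoringsSubMulAction ((Fin 2 → K) ≃ₗ[K] (Fin 2 → K)) (ℙ K (Fin 2 → K)) n) :=
    Quot.congrRight fun _ _ => pglRel_iff_orbitRel
  rw [Nat.card_congr e, ← card_scalarSubgroup (V := Fin 2 → K),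
    ← MulAction.card_mul_card_eq_card_orbitRel_quotient_mul_card]
  · rfl
  intro x
  rw [SubMulAction.stabilizer_of_subMul]
  exact stabilizer_eq_scalarSubgroup (by simp) (exists_three_ne_of_mem_cycleColorings hn x.2)

end PGL

theorem card_orbits_cycConfig_odd_general (K : Type*) [Field K] [Fintype K] (m : ℕ) :
    Nat.card (Quot (pglRel K (2 * m + 1))) =
      ∑ i ∈ range m, Fintype.card K ^ (2 * i) := by
  have hN := card_quot_pglRel_mul_card (K := K) (odd_two_mul_add_one m)
  have hP : Nat.card (ℙ K (Fin 2 → K)) = Fintype.card K + 1 := by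
    rw [Projectivization.card_of_finrank_two K _ (by simp), Nat.card_eq_fintype_card]
  rw [card_linearEquiv_fin, Fin.prod_univ_two, Nat.card_eq_fintype_card (α := K)] at hN
  simp only [Fin.val_zero, Fin.val_one, pow_zero, pow_one] at hN
  set q := Fintype.card K
  have hq : 1 < q := Fintype.one_lt_card
  have hC : (Nat.card (cycConfig K (2 * m + 1)) : ℤ) = q ^ (2 * m + 1) - q := by
    have h := card_cycleColorings hP (2 * m)
    rw [(odd_two_mul_add_one m).neg_one_pow] at h
    exact h.trans (by ring)
  zify [hq.le, Nat.one_le_pow 2 q (by omega), Nat.le_self_pow two_ne_zero q] at hN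
  rw [hC] at hN
  have hgeom := geom_sum_mul ((q : ℤ) ^ 2) m
  simp_rw [← pow_mul] at hgeom
  have hq' : (1 : ℤ) < q := by exact_mod_cast hq
  have hpos : ((q : ℤ) ^ 2 - 1) * (q ^ 2 - q) ≠ 0 := by
    apply mul_ne_zero <;> nlinarith
  have hZ : (Nat.card (Quot (pglRel K (2 * m + 1))) : ℤ) = ∑ i ∈ range m, (q : ℤ) ^ (2 * i) :=
    mul_right_cancel₀ hpos (hN.trans (by linear_combination (q - q ^ 2) * hgeom))
  exact_mod_cast hZ

theorem card_orbits_cycConfig_odd (K : Type*) [Field K] [Fintype K]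
    (hq : 3 ≤ Fintype.card K) (m : ℕ) (hm : 1 ≤ m) :
    Nat.card (Quot (pglRel K (2 * m + 1))) =
      ∑ i ∈ range m, Fintype.card K ^ (2 * i) :=
  card_orbits_cycConfig_odd_general K m
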